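/- For all integers n ≥ 1, ∫₀¹ x^{n-1} (ln(1-x))³ dx = -(H_n³ + 3 H_n ζ_n(2) + 2 ζ_n(3))/n, where H_n = ∑_{j=1}^n 1/j, ζ_n(2) = ∑_{j=1}^n 1/j², ζ_n(3) = ∑_{j=1}^n 1/j³. -/

import Mathlib

/-!
Write `I(n, p) = ∫₀¹ xⁿ log(1 - x)ᵖ dx`. Integrate by parts, taking `x^(n+1) - 1` as the
antiderivative of `(n + 1) xⁿ`: it vanishes at `x = 1`, which kills the boundary term there, and
`(x^(n+1) - 1) / (x - 1) = ∑_{k ≤ n} xᵏ`, so that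
`(n + 1) I(n, p + 1) = -(p + 1) ∑_{k ≤ n} I(k, p)`.
Starting from `I(n, 0) = 1 / (n + 1)` this determines `I(n, 1)`, `I(n, 2)`, `I(n, 3)` in turn;
each closed form is checked by induction on `n`, the step being a polynomial identity in the
partial sums and `1 / (n + 2)`. The logarithmic singularity at `x = 1` is integrable since
`|log t|ᵖ = O(t^(-1/2))`.
-/

open MeasureTheory Set Real Filter Topology Finset
open scoped Nat

lemma abs_log_pow_le {t : ℝ} (ht₀ : 0 < t) (ht₁ : t ≤ 1) (p : ℕ) :
    |log t| ^ p ≤ 2 ^ p * p ! * t ^ (-(1 / 2) : ℝ) := by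
  have hu : 0 ≤ -log t / 2 := by linarith [log_nonpos ht₀.le ht₁]
  have hexp : exp (-log t / 2) = t ^ (-(1 / 2) : ℝ) := by
    rw [rpow_def_of_pos ht₀]; ring_nf
  have h := pow_div_factorial_le_exp _ hu p
  rw [hexp, div_le_iff₀ (by positivity), div_pow] at h
  rw [abs_of_nonpos (log_nonpos ht₀.le ht₁)]
  calc (-log t) ^ p = 2 ^ p * ((-log t) ^ p / 2 ^ p) := by field_simp
    _ ≤ 2 ^ p * (t ^ (-(1 / 2) : ℝ) * p !) := by gcongr
    _ = _ := by ring

lemma intervalIntegrable_log_pow (p : ℕ) :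
    IntervalIntegrable (fun t => log t ^ p) volume 0 1 := by
  refine ((intervalIntegral.intervalIntegrable_rpow' (r := -(1 / 2)) (by norm_num)).const_mul
    (2 ^ p * p ! : ℝ)).mono_fun' (by fun_prop) ?_
  rw [uIoc_of_le zero_le_one]
  filter_upwards [ae_restrict_mem measurableSet_Ioc] with t ⟨ht₀, ht₁⟩
  rw [norm_pow, norm_eq_abs]
  exact abs_log_pow_le ht₀ ht₁ p

lemma intervalIntegrable_pow_mul_log_one_sub_pow (k p : ℕ) :
    IntervalIntegrable (fun x => x ^ k * log (1 - x) ^ p) volume 0 1 := by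
  have h := (intervalIntegrable_log_pow p).comp_sub_left 1
  simp only [sub_self, sub_zero] at h
  exact h.symm.continuousOn_mul (by fun_prop)

lemma tendsto_mul_log_pow_nhdsGT_zero (p : ℕ) :
    Tendsto (fun t => t * log t ^ p) (𝓝[>] 0) (𝓝 0) := by
  have h := ((tendsto_pow_log_div_mul_add_atTop 1 0 p one_ne_zero).comp
    tendsto_inv_nhdsGT_zero).const_mul ((-1) ^ p)
  rw [mul_zero] at h
  refine h.congr' ?_
  filter_upwards [self_mem_nhdsWithin] with t (ht : 0 < t)
  simp only [Function.comp_apply, log_inv, one_mul, add_zero, div_inv_eq_mul]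
  rw [← mul_assoc, ← mul_pow, neg_one_mul, neg_neg, mul_comm]

lemma hasDerivAt_pow_sub_one_mul_log_one_sub_pow (n p : ℕ) {x : ℝ} (hx : x < 1) :
    HasDerivAt (fun x => (x ^ (n + 1) - 1) * log (1 - x) ^ (p + 1))
      ((n + 1) * (x ^ n * log (1 - x) ^ (p + 1))
        + (p + 1) * ∑ k ∈ range (n + 1), x ^ k * log (1 - x) ^ p) x := by
  have hlog : HasDerivAt (fun x => log (1 - x)) (-1 / (1 - x)) x := by
    simpa using ((hasDerivAt_id x).const_sub 1).log (sub_ne_zero.2 hx.ne')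
  refine (((hasDerivAt_pow (n + 1) x).sub_const 1).mul (hlog.pow (p + 1))).congr_deriv ?_
  have hgeom : (x ^ (n + 1) - 1) * (-1 / (1 - x)) = ∑ k ∈ range (n + 1), x ^ k := by
    rw [← geom_sum_mul, mul_assoc, neg_div, ← div_neg, neg_sub,
      mul_one_div_cancel (sub_ne_zero.2 hx.ne), mul_one]
  rw [← sum_mul, ← hgeom]
  simp only [Pi.pow_apply]
  push_cast
  ring

lemma tendsto_pow_sub_one_mul_log_one_sub_pow_nhdsLT_one (n p : ℕ) :
    Tendsto (fun x => (x ^ (n + 1) - 1) * log (1 - x) ^ (p + 1)) (𝓝[<] 1) (𝓝 0) := by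
  have hsub : Tendsto (fun x : ℝ => 1 - x) (𝓝[<] 1) (𝓝[>] 0) := by
    refine tendsto_nhdsWithin_of_tendsto_nhds_of_eventually_within _ ?_ ?_
    · have h : Continuous fun x : ℝ => 1 - x := by fun_prop
      simpa using (h.tendsto' 1 0 (sub_self 1)).mono_left nhdsWithin_le_nhds
    · filter_upwards [self_mem_nhdsWithin] with x (hx : x < 1)
      exact sub_pos.2 hx
  have hgeom :
      Tendsto (fun x : ℝ => -∑ k ∈ range (n + 1), x ^ k) (𝓝[<] 1) (𝓝 (-(n + 1))) := by
    have h : Continuous (fun x : ℝ => -∑ k ∈ range (n + 1), x ^ k) := by fun_prop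
    simpa using (h.tendsto 1).mono_left nhdsWithin_le_nhds
  have h := hgeom.mul ((tendsto_mul_log_pow_nhdsGT_zero (p + 1)).comp hsub)
  rw [mul_zero] at h
  refine h.congr fun x => ?_
  rw [← geom_sum_mul]
  simp only [Function.comp_apply]
  ring

noncomputable def logMoment (n p : ℕ) : ℝ := ∫ x in (0 : ℝ)..1, x ^ n * log (1 - x) ^ p

lemma mul_logMoment_succ_right (n p : ℕ) :
    (n + 1) * logMoment n (p + 1) = -(p + 1) * ∑ k ∈ range (n + 1), logMoment k p := by
  have hint := intervalIntegrable_pow_mul_log_one_sub_pow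
  have hsum : IntervalIntegrable (fun x => ∑ k ∈ range (n + 1), x ^ k * log (1 - x) ^ p)
      volume 0 1 := by
    simpa only [← Finset.sum_fn] using IntervalIntegrable.sum _ fun k _ => hint k p
  have hG₀ :
      Tendsto (fun x : ℝ => (x ^ (n + 1) - 1) * log (1 - x) ^ (p + 1)) (𝓝[>] 0) (𝓝 0) := by
    have h : ContinuousAt (fun x : ℝ => (x ^ (n + 1) - 1) * log (1 - x) ^ (p + 1)) 0 := by
      fun_prop (disch := norm_num)
    simpa using h.tendsto.mono_left nhdsWithin_le_nhds
  have hFTC := intervalIntegral.integral_eq_sub_of_hasDerivAt_of_tendsto zero_lt_one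
    (fun x hx => hasDerivAt_pow_sub_one_mul_log_one_sub_pow n p hx.2)
    (((hint n (p + 1)).const_mul _).add (hsum.const_mul _)) hG₀
    (tendsto_pow_sub_one_mul_log_one_sub_pow_nhdsLT_one n p)
  rw [intervalIntegral.integral_add ((hint n (p + 1)).const_mul _) (hsum.const_mul _),
    intervalIntegral.integral_const_mul, intervalIntegral.integral_const_mul,
    intervalIntegral.integral_finsetSum fun k _ => hint k p, sub_self] at hFTC
  simp only [logMoment]
  linear_combination hFTC

lemma logMoment_zero_succ (p : ℕ) : logMoment 0 (p + 1) = -(p + 1) * logMoment 0 p := by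
  simpa using mul_logMoment_succ_right 0 p

lemma logMoment_succ_succ (n p : ℕ) :
    (n + 2) * logMoment (n + 1) (p + 1)
      = (n + 1) * logMoment n (p + 1) - (p + 1) * logMoment (n + 1) p := by
  have h := mul_logMoment_succ_right (n + 1) p
  rw [sum_range_succ, mul_add, ← mul_logMoment_succ_right] at h
  push_cast at h
  linear_combination h

lemma logMoment_zero_right (n : ℕ) : logMoment n 0 = 1 / (n + 1) := by
  simp [logMoment]

noncomputable def partialZeta (s n : ℕ) : ℝ := ∑ j ∈ Icc 1 n, 1 / (j : ℝ) ^ s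

lemma partialZeta_succ (s n : ℕ) :
    partialZeta s (n + 1) = partialZeta s n + 1 / ((n : ℝ) + 1) ^ s := by
  rw [partialZeta, sum_Icc_succ_top (by omega), partialZeta]
  push_cast; rfl

lemma partialZeta_one_right (s : ℕ) : partialZeta s 1 = 1 := by
  simp [partialZeta]

lemma logMoment_one_right (n : ℕ) : logMoment n 1 = -partialZeta 1 (n + 1) / (n + 1) := by
  induction n with
  | zero => simp [logMoment_zero_succ 0, logMoment_zero_right, partialZeta_one_right]
  | succ n ih =>
    have h := logMoment_succ_succ n 0
    rw [ih, logMoment_zero_right] at h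
    simp only [partialZeta_succ _ (n + 1)] at h ⊢
    push_cast at h ⊢
    field_simp at h ⊢
    linear_combination h

lemma logMoment_two_right (n : ℕ) :
    logMoment n 2 = (partialZeta 1 (n + 1) ^ 2 + partialZeta 2 (n + 1)) / (n + 1) := by
  induction n with
  | zero => simp [logMoment_zero_succ 1, logMoment_one_right, partialZeta_one_right]
  | succ n ih =>
    have h := logMoment_succ_succ n 1
    rw [ih, logMoment_one_right] at h
    simp only [partialZeta_succ _ (n + 1)] at h ⊢
    push_cast at h ⊢
    field_simp at h ⊢
    linear_combination h

lemma logMoment_three_right (n : ℕ) :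
    logMoment n 3 = -(partialZeta 1 (n + 1) ^ 3 + 3 * partialZeta 1 (n + 1) * partialZeta 2 (n + 1)
      + 2 * partialZeta 3 (n + 1)) / (n + 1) := by
  induction n with
  | zero => simp [logMoment_zero_succ 2, logMoment_two_right, partialZeta_one_right]; norm_num
  | succ n ih =>
    have h := logMoment_succ_succ n 2
    rw [ih, logMoment_two_right] at h
    simp only [partialZeta_succ _ (n + 1)] at h ⊢
    push_cast at h ⊢
    field_simp at h ⊢
    linear_combination h

theorem stmt_4 (n : ℕ) (hn : 1 ≤ n) :
    ∫ x in (0:ℝ)..1, x ^ (n - 1) * (Real.log (1 - x)) ^ 3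
      = -((∑ j ∈ Finset.Icc 1 n, (1 : ℝ) / j) ^ 3
          + 3 * (∑ j ∈ Finset.Icc 1 n, (1 : ℝ) / j)
              * (∑ j ∈ Finset.Icc 1 n, (1 : ℝ) / (j : ℝ) ^ 2)
          + 2 * ∑ j ∈ Finset.Icc 1 n, (1 : ℝ) / (j : ℝ) ^ 3) / n := by
  obtain ⟨m, rfl⟩ := Nat.exists_eq_add_of_le' hn
  simpa [logMoment, partialZeta] using logMoment_three_right m
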